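/- Let m = 2 and a_k = 4^{−k} for k = 1, 2, …, and let I = I_ā be the associated Cantor-like set, regarded as a compact subset of ℂ. Then the logarithmic capacity of I is positive: Cap I > 0. -/

import Mathlib

open MeasureTheory Filter Metric

/-- `∏_{1 ≤ j < k ≤ n} |z_j − z_k|` for a tuple of `n` points of `ℂ`. -/
noncomputable def pairProd {n : ℕ} (z : Fin n → ℂ) : ℝ :=
  ∏ q ∈ Finset.univ.filter (fun q : Fin n × Fin n => q.1 < q.2), ‖z q.1 - z q.2‖

/-- `P_n(E)`, the maximum of `∏_{j<k} |z_j − z_k|` over `z_1, …, z_n ∈ E`. -/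
noncomputable def Pseq (E : Set ℂ) (n : ℕ) : ℝ :=
  sSup { p : ℝ | ∃ z : Fin n → ℂ, (∀ i, z i ∈ E) ∧ p = pairProd z }

/-- `D_n(E) = P_n(E)^{2/(n(n−1))}`. -/
noncomputable def Dseq (E : Set ℂ) (n : ℕ) : ℝ :=
  Pseq E n ^ ((2 : ℝ) / ((n : ℝ) * ((n : ℝ) - 1)))

/-- The logarithmic capacity `Cap E = lim_{n→∞} D_n(E)` is positive, i.e. the
(non-increasing) sequence `D_n(E)` tends to a positive limit. -/
def PositiveCapacity (E : Set ℂ) : Prop :=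
  ∃ L : ℝ, 0 < L ∧ Filter.Tendsto (fun n => Dseq E n) Filter.atTop (nhds L)

/-- `A_k = a_1 ⋯ a_k` (with `A_0 = 1`). -/
noncomputable def cantorA (a : ℕ → ℝ) (k : ℕ) : ℝ := ∏ i ∈ Finset.Icc 1 k, a i

/-- The Cantor-like set
`I_ā = { Σ_{k=1}^∞ d_k (A_{k−1} − A_k)/(m−1) : each d_k ∈ {0, 1, …, m−1} }`. -/
noncomputable def cantorLikeSet (m : ℕ) (a : ℕ → ℝ) : Set ℝ :=
  { x | ∃ d : ℕ → ℕ, (∀ k, d k < m) ∧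
      x = ∑' k : ℕ, (d (k + 1) : ℝ) * (cantorA a k - cantorA a (k + 1)) / (m - 1) }

/-!
The level-`K` left endpoints `x_b = Σ_{k<K} b_k (A_k - A_{k+1})`, `b ∈ {0,1}^K`, of the Cantor set
are well separated: if the addresses `b ≠ b'` first differ at digit `s`, then
`|x_b - x_{b'}| ≥ A_s - 2 A_{s+1} ≥ 2^{-(s²+s+1)}`. Splitting the addresses by their first digit,
induction on `K` gives `∏_{b' ≠ b} |x_b - x_{b'}| ≥ (2^{-5})^{2^K}` for every `b`, hence
`P_{2^K}² ≥ (2^{-5})^{2^K · 2^K}` and `D_{2^K} ≥ 2^{-10}`. Deleting each of `n + 1` points in turn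
shows `P_{n+1}^{n-1} ≤ P_n^{n+1}` (Fekete), so `D_n` is non-increasing and its limit is at least
`2^{-10}`.
-/

open Finset Bornology

lemma pairProd_nonneg {n : ℕ} (z : Fin n → ℂ) : 0 ≤ pairProd z :=
  prod_nonneg fun _ _ => norm_nonneg _

lemma pairProd_sq {n : ℕ} (z : Fin n → ℂ) :
    pairProd z ^ 2 = ∏ j, ∏ k ∈ univ.erase j, ‖z j - z k‖ := by
  have hswap : ∏ q ∈ univ.filter (fun q : Fin n × Fin n => q.2 < q.1), ‖z q.1 - z q.2‖
      = pairProd z :=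
    prod_equiv (Equiv.prodComm _ _) (by simp) (fun q _ => norm_sub_rev _ _)
  have hdisj : Disjoint (univ.filter (fun q : Fin n × Fin n => q.1 < q.2))
      (univ.filter (fun q : Fin n × Fin n => q.2 < q.1)) :=
    disjoint_filter.2 fun q _ h => h.not_gt
  rw [sq]
  nth_rw 2 [← hswap]
  rw [pairProd, ← prod_union hdisj, ← filter_or, prod_filter, Fintype.prod_prod_type]
  refine prod_congr rfl fun j _ => ?_
  rw [← filter_ne', prod_filter]
  exact prod_congr rfl fun k _ => by simp [ne_comm]

lemma prod_pairProd_succAbove {n : ℕ} (z : Fin (n + 1) → ℂ) :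
    ∏ i, pairProd (z ∘ Fin.succAbove i) = pairProd z ^ (n - 1) := by
  have hdel : ∀ i : Fin (n + 1), pairProd (z ∘ i.succAbove) =
      ∏ q ∈ univ.filter (fun q : Fin (n + 1) × Fin (n + 1) => q.1 < q.2),
        if q.1 ≠ i ∧ q.2 ≠ i then ‖z q.1 - z q.2‖ else 1 := by
    intro i
    rw [pairProd, prod_filter, prod_filter, Fintype.prod_prod_type, Fintype.prod_prod_type,
      Fin.prod_univ_succAbove _ i]
    simp [Fin.prod_univ_succAbove _ i, Fin.succAbove_ne, Fin.succAbove_lt_succAbove_iff]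
  simp only [hdel]
  rw [Finset.prod_comm, pairProd, ← prod_pow]
  refine prod_congr rfl fun q hq => ?_
  rw [← prod_filter, prod_const]
  congr 1
  have hlt := (mem_filter.1 hq).2
  have hkeep : univ.filter (fun i => q.1 ≠ i ∧ q.2 ≠ i) = (univ.erase q.1).erase q.2 := by
    ext i; simp [eq_comm, and_comm]
  rw [hkeep, card_erase_of_mem (by simp [hlt.ne']), card_erase_of_mem (mem_univ _), card_univ,
    Fintype.card_fin]
  omega

lemma prod_univ_erase_cons {α M : Type*} [Fintype α] [DecidableEq α] [CommMonoid M] {K : ℕ}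
    (f : (Fin (K + 1) → α) → M) (c : α) (t : Fin K → α) :
    ∏ b ∈ univ.erase (Fin.cons c t : Fin (K + 1) → α), f b =
      (∏ t' ∈ univ.erase t, f (Fin.cons c t')) * ∏ c' ∈ univ.erase c, ∏ t', f (Fin.cons c' t') := by
  rw [← filter_ne', prod_filter, ← (Fin.consEquiv fun _ => α).prod_comp, Fintype.prod_prod_type,
    ← mul_prod_erase univ _ (mem_univ c)]
  congr 1
  · rw [← filter_ne', prod_filter]
    simp [Fin.consEquiv, Fin.cons_inj]
  · exact prod_congr rfl fun c' hc' => by simp [Fin.consEquiv, Fin.cons_inj, ne_of_mem_erase hc']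

lemma Pseq_nonneg (E : Set ℂ) (n : ℕ) : 0 ≤ Pseq E n :=
  Real.sSup_nonneg <| by rintro _ ⟨z, -, rfl⟩; exact pairProd_nonneg z

lemma Dseq_nonneg (E : Set ℂ) (n : ℕ) : 0 ≤ Dseq E n :=
  Real.rpow_nonneg (Pseq_nonneg E n) _

section Capacity

variable {E : Set ℂ}

lemma bddAbove_pairProd (hE : IsBounded E) (n : ℕ) :
    BddAbove {p : ℝ | ∃ z : Fin n → ℂ, (∀ i, z i ∈ E) ∧ p = pairProd z} := by
  refine ⟨diam E ^ #(univ.filter fun q : Fin n × Fin n => q.1 < q.2), ?_⟩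
  rintro _ ⟨z, hz, rfl⟩
  rw [pairProd, ← prod_const]
  exact prod_le_prod (fun _ _ => norm_nonneg _)
    fun q _ => dist_eq_norm (z q.1) (z q.2) ▸ dist_le_diam_of_mem hE (hz q.1) (hz q.2)

lemma pairProd_le_Pseq (hE : IsBounded E) {n : ℕ} {z : Fin n → ℂ} (hz : ∀ i, z i ∈ E) :
    pairProd z ≤ Pseq E n :=
  le_csSup (bddAbove_pairProd hE n) ⟨z, hz, rfl⟩

lemma pairProd_pow_le_Pseq_pow (hE : IsBounded E) {n : ℕ} {z : Fin (n + 1) → ℂ}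
    (hz : ∀ i, z i ∈ E) : pairProd z ^ (n - 1) ≤ Pseq E n ^ (n + 1) := by
  rw [← prod_pairProd_succAbove]
  calc ∏ i, pairProd (z ∘ Fin.succAbove i) ≤ ∏ _i : Fin (n + 1), Pseq E n :=
        prod_le_prod (fun _ _ => pairProd_nonneg _) fun i _ => pairProd_le_Pseq hE fun _ => hz _
    _ = Pseq E n ^ (n + 1) := by simp

lemma Pseq_succ_le (hE : IsBounded E) {n : ℕ} (hn : 2 ≤ n) :
    Pseq E (n + 1) ≤ Pseq E n ^ (((n : ℝ) + 1) / ((n : ℝ) - 1)) := by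
  refine Real.sSup_le ?_ (Real.rpow_nonneg (Pseq_nonneg E n) _)
  rintro _ ⟨z, hz, rfl⟩
  have h := Real.rpow_le_rpow (pow_nonneg (pairProd_nonneg z) _) (pairProd_pow_le_Pseq_pow hE hz)
    (inv_nonneg.2 (Nat.cast_nonneg (n - 1)))
  rw [Real.pow_rpow_inv_natCast (pairProd_nonneg z) (by omega), ← Real.rpow_natCast,
    ← Real.rpow_mul (Pseq_nonneg E n), Nat.cast_sub (by omega)] at h
  convert h using 2
  push_cast
  ring

lemma Dseq_succ_le (hE : IsBounded E) {n : ℕ} (hn : 2 ≤ n) : Dseq E (n + 1) ≤ Dseq E n := by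
  have hn' : (2 : ℝ) ≤ n := by exact_mod_cast hn
  calc Dseq E (n + 1)
      ≤ (Pseq E n ^ (((n : ℝ) + 1) / ((n : ℝ) - 1))) ^ (2 / (((n : ℝ) + 1) * n)) := by
        rw [Dseq, Nat.cast_succ, add_sub_cancel_right]
        exact Real.rpow_le_rpow (Pseq_nonneg E _) (Pseq_succ_le hE hn) (by positivity)
    _ = Dseq E n := by
        rw [← Real.rpow_mul (Pseq_nonneg E n), Dseq]
        have : (n : ℝ) - 1 ≠ 0 := by linarith
        field_simp

lemma Dseq_add_two_antitone (hE : IsBounded E) : Antitone fun j => Dseq E (j + 2) :=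
  antitone_nat_of_succ_le fun _ => Dseq_succ_le hE (by omega)

lemma positiveCapacity_of_frequently_le_Dseq (hE : IsBounded E) {c : ℝ} (hc : 0 < c)
    (h : ∃ᶠ n in atTop, c ≤ Dseq E n) : PositiveCapacity E := by
  have hlow : ∀ j, c ≤ Dseq E (j + 2) := by
    intro j
    obtain ⟨n, hn, hcn⟩ := frequently_atTop.1 h (j + 2)
    obtain ⟨k, rfl⟩ : ∃ k, n = k + 2 := ⟨n - 2, by omega⟩
    exact hcn.trans (Dseq_add_two_antitone hE (show j ≤ k by omega))
  refine ⟨⨅ j, Dseq E (j + 2), hc.trans_le (le_ciInf hlow), ?_⟩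
  refine (tendsto_add_atTop_iff_nat 2).1 (tendsto_atTop_ciInf (Dseq_add_two_antitone hE) ?_)
  exact ⟨0, by rintro _ ⟨j, rfl⟩; exact Dseq_nonneg E _⟩

lemma sq_le_Dseq_of_pow_le_prod_erase (hE : IsBounded E) {n : ℕ} (hn : 2 ≤ n) {ρ : ℝ}
    (hρ0 : 0 < ρ) (hρ1 : ρ ≤ 1) {z : Fin n → ℂ} (hz : ∀ i, z i ∈ E)
    (h : ∀ j, ρ ^ n ≤ ∏ k ∈ univ.erase j, ‖z j - z k‖) : ρ ^ 2 ≤ Dseq E n := by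
  have hn' : (2 : ℝ) ≤ n := by exact_mod_cast hn
  have hsq : (ρ ^ n) ^ n ≤ Pseq E n ^ 2 :=
    calc (ρ ^ n) ^ n = ∏ _j : Fin n, ρ ^ n := by simp
      _ ≤ pairProd z ^ 2 := pairProd_sq z ▸ prod_le_prod (fun _ _ => by positivity) fun j _ => h j
      _ ≤ Pseq E n ^ 2 := pow_le_pow_left₀ (pairProd_nonneg z) (pairProd_le_Pseq hE hz) 2
  calc ρ ^ 2 = ρ ^ (2 : ℝ) := (Real.rpow_natCast ρ 2).symm
    _ ≤ ρ ^ ((n : ℝ) / (n - 1)) := by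
        refine Real.rpow_le_rpow_of_exponent_ge hρ0 hρ1 ?_
        rw [div_le_iff₀ (by linarith)]; linarith
    _ = ((ρ ^ n) ^ n) ^ (1 / ((n : ℝ) * (n - 1))) := by
        rw [← pow_mul, ← Real.rpow_natCast, ← Real.rpow_mul hρ0.le]
        have : (n : ℝ) - 1 ≠ 0 := by linarith
        congr 1; push_cast; field_simp
    _ ≤ (Pseq E n ^ 2) ^ (1 / ((n : ℝ) * (n - 1))) :=
        Real.rpow_le_rpow (by positivity) hsq
          (div_nonneg zero_le_one (mul_nonneg (by linarith) (by linarith)))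
    _ = Dseq E n := by
        rw [Dseq, ← Real.rpow_natCast, ← Real.rpow_mul (Pseq_nonneg E n)]
        congr 1; push_cast; ring

end Capacity

section CantorLikeSet

variable {a : ℕ → ℝ}

lemma cantorA_zero : cantorA a 0 = 1 := by simp [cantorA]

lemma cantorA_succ (k : ℕ) : cantorA a (k + 1) = cantorA a k * a (k + 1) :=
  prod_Icc_succ_top (by omega) a

lemma cantorA_nonneg (ha0 : ∀ k, 0 ≤ a k) (k : ℕ) : 0 ≤ cantorA a k :=
  prod_nonneg fun i _ => ha0 i

lemma cantorA_succ_le (ha0 : ∀ k, 0 ≤ a k) (ha1 : ∀ k, a k ≤ 1) (k : ℕ) :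
    cantorA a (k + 1) ≤ cantorA a k := by
  rw [cantorA_succ]
  exact mul_le_of_le_one_right (cantorA_nonneg ha0 k) (ha1 _)

lemma cantorLikeSet_subset_Icc {m : ℕ} (hm : 2 ≤ m) (ha0 : ∀ k, 0 ≤ a k) (ha1 : ∀ k, a k ≤ 1) :
    cantorLikeSet m a ⊆ Set.Icc 0 1 := by
  rintro _ ⟨d, hd, rfl⟩
  have hm' : (0 : ℝ) < m - 1 := by
    rw [sub_pos]; exact_mod_cast hm
  have hterm : ∀ k, 0 ≤ (d (k + 1) : ℝ) * (cantorA a k - cantorA a (k + 1)) / (m - 1) ∧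
      (d (k + 1) : ℝ) * (cantorA a k - cantorA a (k + 1)) / (m - 1) ≤
        cantorA a k - cantorA a (k + 1) := by
    intro k
    have hgap := sub_nonneg.2 (cantorA_succ_le ha0 ha1 k)
    have hd' : (d (k + 1) : ℝ) ≤ m - 1 := by
      rw [le_sub_iff_add_le]; exact_mod_cast hd (k + 1)
    refine ⟨by positivity, ?_⟩
    rw [div_le_iff₀ hm', mul_comm]
    exact mul_le_mul_of_nonneg_left hd' hgap
  refine ⟨tsum_nonneg fun k => (hterm k).1, Real.tsum_le_of_sum_range_le (fun k => (hterm k).1)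
    fun n => (sum_le_sum fun k _ => (hterm k).2).trans ?_⟩
  rw [sum_range_sub', cantorA_zero]
  linarith [cantorA_nonneg ha0 n]

lemma isBounded_ofReal_image_cantorLikeSet {m : ℕ} (hm : 2 ≤ m) (ha0 : ∀ k, 0 ≤ a k)
    (ha1 : ∀ k, a k ≤ 1) : IsBounded (Complex.ofReal '' cantorLikeSet m a) :=
  Complex.isometry_ofReal.lipschitz.isBounded_image
    ((isBounded_Icc 0 1).subset (cantorLikeSet_subset_Icc hm ha0 ha1))

end CantorLikeSet

-- For `s = 0` these are the left endpoints of the `2 ^ K` basic intervals of level `K` of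
-- `cantorLikeSet 2 a`; the shift `s` is what makes a recursion on the first digit possible.
noncomputable def levelPoint (a : ℕ → ℝ) (s : ℕ) {K : ℕ} (b : Fin K → Bool) : ℝ :=
  ∑ k : Fin K, if b k then cantorA a (s + k) - cantorA a (s + k + 1) else 0

section LevelPoint

variable {a : ℕ → ℝ}

lemma levelPoint_cons (s : ℕ) {K : ℕ} (c : Bool) (t : Fin K → Bool) :
    levelPoint a s (Fin.cons c t : Fin (K + 1) → Bool) =
      (if c then cantorA a s - cantorA a (s + 1) else 0) + levelPoint a (s + 1) t := by
  simp [levelPoint, Fin.sum_univ_succ, add_assoc, add_comm 1]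

lemma levelPoint_mem_Icc (ha0 : ∀ k, 0 ≤ a k) (ha1 : ∀ k, a k ≤ 1) (s : ℕ) {K : ℕ}
    (b : Fin K → Bool) : levelPoint a s b ∈ Set.Icc 0 (cantorA a s - cantorA a (s + K)) := by
  induction K generalizing s with
  | zero => simp [levelPoint]
  | succ K ih =>
    obtain ⟨c, t, rfl⟩ : ∃ c t, b = Fin.cons c t := ⟨b 0, Fin.tail b, (Fin.cons_self_tail b).symm⟩
    obtain ⟨h0, h1⟩ := ih (s + 1) t
    have hs := cantorA_succ_le ha0 ha1 s
    rw [levelPoint_cons, show s + (K + 1) = s + 1 + K by omega]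
    cases c <;> constructor <;> simp <;> linarith

lemma sub_two_mul_le_abs_levelPoint_sub (ha0 : ∀ k, 0 ≤ a k) (ha1 : ∀ k, a k ≤ 1) (s : ℕ)
    {K : ℕ} {c c' : Bool} (hc : c ≠ c') (t t' : Fin K → Bool) :
    cantorA a s - 2 * cantorA a (s + 1) ≤
      |levelPoint a s (Fin.cons c t : Fin (K + 1) → Bool) - levelPoint a s (Fin.cons c' t')| := by
  obtain ⟨h0, h1⟩ := levelPoint_mem_Icc ha0 ha1 (s + 1) t
  obtain ⟨h0', h1'⟩ := levelPoint_mem_Icc ha0 ha1 (s + 1) t'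
  have hK := cantorA_nonneg ha0 (s + 1 + K)
  rw [levelPoint_cons, levelPoint_cons, le_abs]
  cases c <;> cases c' <;> simp at hc ⊢
  · right; linarith
  · left; linarith

lemma levelPoint_zero_mem_cantorLikeSet {K : ℕ} (b : Fin K → Bool) :
    levelPoint a 0 b ∈ cantorLikeSet 2 a := by
  set digit : ℕ → Bool := fun k => if h : k < K then b ⟨k, h⟩ else false
  refine ⟨fun k => (digit (k - 1)).toNat, fun k => Bool.toNat_lt _, ?_⟩
  rw [tsum_eq_sum (s := range K), sum_range, levelPoint]
  · refine sum_congr rfl fun k _ => ?_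
    simp only [digit, Nat.add_sub_cancel, dif_pos k.isLt, Fin.eta, zero_add]
    cases b k <;> norm_num
  · intro k hk
    simp [digit, not_lt.1 (mem_range.not.1 hk)]

end LevelPoint

section QuarterCantor

local notation "a₄" => fun k : ℕ => (4 : ℝ)⁻¹ ^ k

lemma cantorA_quarter (k : ℕ) : cantorA a₄ k = (2 : ℝ)⁻¹ ^ (k * (k + 1)) := by
  induction k with
  | zero => simp [cantorA_zero]
  | succ k ih =>
    rw [cantorA_succ, ih, show (4 : ℝ)⁻¹ = 2⁻¹ ^ 2 by norm_num, ← pow_mul, ← pow_add]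
    ring_nf

lemma pow_le_cantorA_quarter_sub_two_mul (s : ℕ) :
    (2 : ℝ)⁻¹ ^ (s ^ 2 + s + 1) ≤ cantorA a₄ s - 2 * cantorA a₄ (s + 1) := by
  have hq : (4 : ℝ)⁻¹ ^ (s + 1) ≤ 4⁻¹ := pow_le_of_le_one (by norm_num) (by norm_num) (by omega)
  have hA : (0 : ℝ) < 2⁻¹ ^ (s * (s + 1)) := by positivity
  rw [cantorA_succ, cantorA_quarter, show s ^ 2 + s + 1 = s * (s + 1) + 1 by ring, pow_succ]
  nlinarith

-- The exponent `f s = s² + 3s + 5` solves `2 f s = f (s + 1) + (s² + s + 1)`, matching the split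
-- of the product by the first digit.
lemma pow_le_prod_erase_abs_levelPoint_quarter_sub (K s : ℕ) (b : Fin K → Bool) :
    ((2 : ℝ)⁻¹ ^ (s ^ 2 + 3 * s + 5)) ^ 2 ^ K ≤
      ∏ b' ∈ univ.erase b, |levelPoint a₄ s b - levelPoint a₄ s b'| := by
  induction K generalizing s with
  | zero =>
    rw [eq_empty_of_forall_notMem fun b' hb' => ne_of_mem_erase hb' (Subsingleton.elim _ _),
      prod_empty]
    exact pow_le_one₀ (by positivity) (pow_le_one₀ (by norm_num) (by norm_num))
  | succ K ih =>
    obtain ⟨c, t, rfl⟩ : ∃ c t, b = Fin.cons c t := ⟨b 0, Fin.tail b, (Fin.cons_self_tail b).symm⟩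
    have hc : univ.erase c = {!c} := by cases c <;> decide
    have hsame : ∏ t' ∈ univ.erase t,
        |levelPoint a₄ s (Fin.cons c t : Fin (K + 1) → Bool) - levelPoint a₄ s (Fin.cons c t')| =
        ∏ t' ∈ univ.erase t, |levelPoint a₄ (s + 1) t - levelPoint a₄ (s + 1) t'| := by
      simp only [levelPoint_cons, add_sub_add_left_eq_sub]
    have hother : ((2 : ℝ)⁻¹ ^ (s ^ 2 + s + 1)) ^ 2 ^ K ≤ ∏ t' : Fin K → Bool,
        |levelPoint a₄ s (Fin.cons c t : Fin (K + 1) → Bool) -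
          levelPoint a₄ s (Fin.cons (!c) t')| :=
      calc ((2 : ℝ)⁻¹ ^ (s ^ 2 + s + 1)) ^ 2 ^ K
          = ∏ _t' : Fin K → Bool, (2 : ℝ)⁻¹ ^ (s ^ 2 + s + 1) := by simp
        _ ≤ _ := prod_le_prod (fun _ _ => by positivity) fun t' _ =>
          (pow_le_cantorA_quarter_sub_two_mul s).trans <| sub_two_mul_le_abs_levelPoint_sub
            (fun _ => by positivity) (fun _ => pow_le_one₀ (by norm_num) (by norm_num)) s
            (by cases c <;> decide) t t'
    rw [prod_univ_erase_cons, hc, prod_singleton, hsame]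
    calc ((2 : ℝ)⁻¹ ^ (s ^ 2 + 3 * s + 5)) ^ 2 ^ (K + 1)
        = ((2 : ℝ)⁻¹ ^ ((s + 1) ^ 2 + 3 * (s + 1) + 5)) ^ 2 ^ K *
            ((2 : ℝ)⁻¹ ^ (s ^ 2 + s + 1)) ^ 2 ^ K := by
          rw [← pow_mul, ← pow_mul, ← pow_mul, ← pow_add]; ring_nf
      _ ≤ _ := mul_le_mul (ih (s + 1) t) hother (by positivity)
          (prod_nonneg fun _ _ => abs_nonneg _)

lemma isBounded_quarterCantor : IsBounded (Complex.ofReal '' cantorLikeSet 2 a₄) :=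
  isBounded_ofReal_image_cantorLikeSet le_rfl (fun _ => by positivity)
    (fun _ => pow_le_one₀ (by norm_num) (by norm_num))

lemma sq_le_Dseq_quarterCantor_two_pow {K : ℕ} (hK : 1 ≤ K) :
    ((2 : ℝ)⁻¹ ^ 5) ^ 2 ≤ Dseq (Complex.ofReal '' cantorLikeSet 2 a₄) (2 ^ K) := by
  let σ : Fin (2 ^ K) ≃ (Fin K → Bool) := Fintype.equivOfCardEq (by simp)
  refine sq_le_Dseq_of_pow_le_prod_erase isBounded_quarterCantor
    (le_self_pow₀ one_le_two (by omega)) (by positivity) (by norm_num)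
    (fun i => ⟨_, levelPoint_zero_mem_cantorLikeSet (σ i), rfl⟩) fun j => ?_
  rw [prod_equiv σ (t := univ.erase (σ j))
    (g := fun b => |levelPoint a₄ 0 (σ j) - levelPoint a₄ 0 b|) (by simp) fun k _ => by
    rw [← Complex.ofReal_sub, Complex.norm_real, Real.norm_eq_abs]]
  simpa using pow_le_prod_erase_abs_levelPoint_quarter_sub K 0 (σ j)

end QuarterCantor

/-- For `m = 2` and `a_k = 4^{−k}`, the Cantor-like set `I`, regarded as a compact
subset of `ℂ`, has positive logarithmic capacity. -/
theorem stmt10 :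
    PositiveCapacity (Complex.ofReal '' cantorLikeSet 2 (fun k : ℕ => (4 : ℝ)⁻¹ ^ k)) := by
  refine positiveCapacity_of_frequently_le_Dseq isBounded_quarterCantor (by positivity)
    (frequently_atTop.2 fun N => ⟨2 ^ (N + 1), ?_, sq_le_Dseq_quarterCantor_two_pow (by omega)⟩)
  exact (Nat.lt_two_pow_self).le.trans (Nat.pow_le_pow_right two_pos N.le_succ)
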